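/- arXiv:2410.19422 — 6 statements merged into one kernel-verified Lean document; each statement's English description precedes it below -/
import Mathlib

section
/- For a 2-(v,k,λ) design with replication number r and block count b, one has r(k−1)=λ(v−1), vr=bk, and r>λ; moreover b≥v and k≤r, with strict inequalities b>v and k<r when the design is non-symmetric (b≠v). -/
/-!
Counting flags (point, block) gives `v r = b k`, and counting flags through a fixed point `p`
against the other `v - 1` points gives `r (k - 1) = λ (v - 1)`; since `k < v` this forces `λ < r`.
Fisher's inequality `v ≤ b` comes from the incidence matrix `M`: its Gram matrix
`M Mᵀ = (r - λ) I + λ J` is positive definite, so `v = rank (M Mᵀ) ≤ rank M ≤ b`.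
Then `k ≤ r`, strictly when `v < b`, follows from `v r = b k`.
-/

open Finset Matrix

namespace Matrix

theorem posDef_smul_one_add_smul_of_one {n : Type*} [Fintype n] [DecidableEq n] {a c : ℚ}
    (ha : 0 < a) (hc : 0 ≤ c) : (a • (1 : Matrix n n ℚ) + c • of fun _ _ => 1).PosDef := by
  have hJ : vecMulVec (1 : n → ℚ) (star 1) = (of fun _ _ => 1 : Matrix n n ℚ) := by ext; simp
  exact (PosDef.one.smul ha).add_posSemidef (hJ ▸ posSemidef_vecMulVec_self_star 1 |>.smul hc)

end Matrix

namespace Finset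

variable {α : Type*} [DecidableEq α] {Bs : Finset (Finset α)} {k r lam : ℕ}

def incidenceMatrix (Bs : Finset (Finset α)) : Matrix α Bs ℚ :=
  of fun a B => if a ∈ B.1 then 1 else 0

theorem incidenceMatrix_mul_transpose_apply (a b : α) :
    (incidenceMatrix Bs * (incidenceMatrix Bs)ᵀ) a b = #{B ∈ Bs | a ∈ B ∧ b ∈ B} := by
  simp only [incidenceMatrix, mul_apply, transpose_apply, of_apply, ite_zero_mul_ite_zero,
    mul_one]
  rw [sum_coe_sort Bs (fun B => if a ∈ B ∧ b ∈ B then (1 : ℚ) else 0), sum_boole]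

theorem incidenceMatrix_mul_transpose_eq
    (hlam : ∀ a b : α, a ≠ b → #{B ∈ Bs | a ∈ B ∧ b ∈ B} = lam)
    (hr : ∀ a, #{B ∈ Bs | a ∈ B} = r) :
    incidenceMatrix Bs * (incidenceMatrix Bs)ᵀ
      = ((r : ℚ) - lam) • (1 : Matrix α α ℚ) + (lam : ℚ) • of fun _ _ => 1 := by
  ext a b
  rw [incidenceMatrix_mul_transpose_apply]
  by_cases hab : a = b
  · subst hab; simp [hr]
  · simp [hlam a b hab, hab]

variable [Fintype α]

theorem card_mul_eq_card_mul_of_regular (hk : ∀ B ∈ Bs, #B = k)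
    (hr : ∀ a, #{B ∈ Bs | a ∈ B} = r) : Fintype.card α * r = #Bs * k := by
  rw [← sum_card hr, sum_const_nat hk]

theorem mul_pred_eq_mul_card_pred (p : α) (hk : ∀ B ∈ Bs, #B = k)
    (hlam : ∀ a b : α, a ≠ b → #{B ∈ Bs | a ∈ B ∧ b ∈ B} = lam)
    (hr : ∀ a, #{B ∈ Bs | a ∈ B} = r) : r * (k - 1) = lam * (Fintype.card α - 1) := by
  have hderived : ∀ a ∈ univ.erase p, #{B ∈ {B ∈ Bs | p ∈ B} | a ∈ B} = lam := fun a ha => by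
    rw [filter_filter]; exact hlam p a (ne_of_mem_erase ha).symm
  have hsum := sum_card_inter hderived
  rw [card_erase_of_mem (mem_univ p), card_univ, mul_comm] at hsum
  rw [← hsum, ← hr p, ← smul_eq_mul, ← sum_const]
  refine sum_congr rfl fun B hB => ?_
  obtain ⟨hB, hpB⟩ := mem_filter.mp hB
  rw [erase_inter, univ_inter, card_erase_of_mem hpB, hk B hB]

theorem card_le_card_of_balanced (hlr : lam < r)
    (hlam : ∀ a b : α, a ≠ b → #{B ∈ Bs | a ∈ B ∧ b ∈ B} = lam)
    (hr : ∀ a, #{B ∈ Bs | a ∈ B} = r) : Fintype.card α ≤ #Bs := by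
  set M := incidenceMatrix Bs
  have hpos : (M * Mᵀ).PosDef := by
    rw [incidenceMatrix_mul_transpose_eq hlam hr]
    exact posDef_smul_one_add_smul_of_one (by simpa using hlr) lam.cast_nonneg
  calc Fintype.card α = (M * Mᵀ).rank := (rank_of_isUnit _ hpos.isUnit).symm
    _ ≤ M.rank := rank_mul_le_left M Mᵀ
    _ ≤ Fintype.card Bs := M.rank_le_card_width
    _ = #Bs := Fintype.card_coe Bs

end Finset

/-- Basic counting identities for a non-trivial 2-(v,k,λ) design:
r(k−1)=λ(v−1), vr=bk, r>λ, b≥v, k≤r, with strict inequalities when b≠v. -/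
theorem stmt0 {P : Type} [Fintype P] [DecidableEq P]
    (Bs : Finset (Finset P)) (v b r k lam : ℕ)
    (hlampos : 0 < lam)
    (hnt : 2 < k ∧ k < v - 1)
    (hv : Fintype.card P = v)
    (hk : ∀ bl ∈ Bs, bl.card = k)
    (hlam : ∀ p q : P, p ≠ q →
      (Bs.filter (fun bl => p ∈ bl ∧ q ∈ bl)).card = lam)
    (hr : ∀ p : P, (Bs.filter (fun bl => p ∈ bl)).card = r)
    (hb : Bs.card = b) :
    r * (k - 1) = lam * (v - 1) ∧ v * r = b * k ∧ lam < r ∧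
      v ≤ b ∧ k ≤ r ∧ (b ≠ v → v < b ∧ k < r) := by
  obtain ⟨hk2, hkv⟩ := hnt
  subst hv hb
  obtain ⟨p⟩ : Nonempty P := Fintype.card_pos_iff.mp (by omega)
  have hpairs := mul_pred_eq_mul_card_pred p hk hlam hr
  have hflags := card_mul_eq_card_mul_of_regular hk hr
  have hlr : lam < r := by
    by_contra! hrl
    have : lam * (Fintype.card P - 1) ≤ lam * (k - 1) := hpairs ▸ Nat.mul_le_mul_right _ hrl
    have := Nat.le_of_mul_le_mul_left this hlampos
    omega
  have hvb := card_le_card_of_balanced hlr hlam hr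
  refine ⟨hpairs, hflags, hlr, hvb, ?_, fun hne => ?_⟩
  · exact Nat.le_of_mul_le_mul_left (hflags ▸ Nat.mul_le_mul_right k hvb) (by omega)
  · have hvb' : Fintype.card P < #Bs := hvb.lt_of_ne (Ne.symm hne)
    exact ⟨hvb', Nat.lt_of_mul_lt_mul_left (hflags ▸ Nat.mul_lt_mul_of_pos_right hvb' (by omega))⟩
end

section
/- Let v,k,r,λ,y be positive integers with y≥2, λ≥2, 2<k<v−1, satisfying r(k−1)=λ(v−1) and (y−1)(r−1)=(k−1)(λ−1) and y<k. Then v < (k²−k)/(y−1). -/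
/-!
Writing `a = k - 1` and `b = y - 1`, eliminating `r` between the two design identities gives
`λ (v b - k a) = (λ + a)(b - a)`, whose right-hand side is negative as soon as `y < k`.
-/

theorem lam_mul_sub_eq_of_design_identities {R : Type*} [CommRing R] {v k r lam y : R}
    (h1 : r * (k - 1) = lam * (v - 1)) (h2 : (y - 1) * (r - 1) = (k - 1) * (lam - 1)) :
    lam * (v * (y - 1) - (k ^ 2 - k)) = (lam + k - 1) * (y - k) := by
  linear_combination (1 - y) * h1 + (k - 1) * h2

theorem lt_div_of_design_identities {K : Type*} [Field K] [LinearOrder K] [IsStrictOrderedRing K]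
    {v k r lam y : K} (h1 : r * (k - 1) = lam * (v - 1))
    (h2 : (y - 1) * (r - 1) = (k - 1) * (lam - 1)) (hlam : 0 < lam) (hy : 1 < y) (hyk : y < k) :
    v < (k ^ 2 - k) / (y - 1) := by
  have hneg : lam * (v * (y - 1) - (k ^ 2 - k)) < 0 := by
    rw [lam_mul_sub_eq_of_design_identities h1 h2]
    exact mul_neg_of_pos_of_neg (by linarith) (by linarith)
  rw [lt_div_iff₀ (by linarith)]
  linarith [neg_of_mul_neg_right hneg hlam.le]

theorem stmt2_general (v k r lam y : ℕ)
    (hv : 0 < v) (hk0 : 0 < k) (hr : 0 < r) (hlam : 2 ≤ lam) (hy : 2 ≤ y)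
    (h1 : r * (k - 1) = lam * (v - 1))
    (h2 : (y - 1) * (r - 1) = (k - 1) * (lam - 1))
    (hyk : y < k) :
    (v : ℚ) < ((k : ℚ) ^ 2 - k) / ((y : ℚ) - 1) := by
  have h1q : (r : ℚ) * (k - 1) = lam * (v - 1) := by
    simpa [Nat.cast_sub hv, Nat.cast_sub hk0] using congrArg (Nat.cast : ℕ → ℚ) h1
  have h2q : ((y : ℚ) - 1) * (r - 1) = (k - 1) * (lam - 1) := by
    simpa [Nat.cast_sub hr, Nat.cast_sub hk0, Nat.cast_sub (by omega : 1 ≤ y),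
      Nat.cast_sub (by omega : 1 ≤ lam)] using congrArg (Nat.cast : ℕ → ℚ) h2
  exact lt_div_of_design_identities h1q h2q (by exact_mod_cast (by omega : 0 < lam))
    (by exact_mod_cast hy) (by exact_mod_cast hyk)

/-- From r(k−1)=λ(v−1), (y−1)(r−1)=(k−1)(λ−1) and y < k one gets
v < (k²−k)/(y−1). -/
theorem stmt2 (v k r lam y : ℕ)
    (hv : 0 < v) (hk0 : 0 < k) (hr : 0 < r) (hlam : 2 ≤ lam) (hy : 2 ≤ y)
    (hk : 2 < k) (hkv : k < v - 1)
    (h1 : r * (k - 1) = lam * (v - 1))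
    (h2 : (y - 1) * (r - 1) = (k - 1) * (lam - 1))
    (hyk : y < k) :
    (v : ℚ) < ((k : ℚ) ^ 2 - k) / ((y : ℚ) - 1) :=
  stmt2_general v k r lam y hv hk0 hr hlam hy h1 h2 hyk
end

section
/- Let v,k,r,λ,y be positive integers with y≥2, λ≥2, satisfying r(k−1)=λ(v−1) and (y−1)(r−1)=(k−1)(λ−1). Then v ≤ 2(y−1)·r²/gcd(r,λ)². (In fact v−1 = r(k−1)/λ < 2(y−1)r²/λ².) -/
/-!
Eliminating `k - 1` from the two identities gives `λ(λ-1)(v-1) = (y-1) r (r-1)`, and since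
`λ(r-1) < 2r(λ-1)` this forces `λ²(v-1) < 2(y-1)r²`. Dividing `λ` and `r` by `g = gcd(r, λ)` keeps the strict inequality
between integers, so `(λ/g)²(v-1) + 1 ≤ 2(y-1)(r/g)²`, and `v ≤ (λ/g)²(v-1) + 1`.
-/

lemma mul_pred_mul_pred_eq {v k r lam y : ℕ}
    (h1 : r * (k - 1) = lam * (v - 1))
    (h2 : (y - 1) * (r - 1) = (k - 1) * (lam - 1)) :
    lam * (lam - 1) * (v - 1) = r * (y - 1) * (r - 1) :=
  calc lam * (lam - 1) * (v - 1) = (lam - 1) * (lam * (v - 1)) := by ring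
    _ = (lam - 1) * (r * (k - 1)) := by rw [h1]
    _ = r * ((k - 1) * (lam - 1)) := by ring
    _ = r * (y - 1) * (r - 1) := by rw [← h2, mul_assoc]

lemma sq_mul_lt_of_mul_pred_mul_eq {lam r c n : ℕ} (hlam : 2 ≤ lam) (hr : 0 < r) (hc : 0 < c)
    (h : lam * (lam - 1) * n = r * c * (r - 1)) :
    lam ^ 2 * n < 2 * c * r ^ 2 := by
  have key : lam * (r - 1) < 2 * r * (lam - 1) := by
    zify [(by omega : 1 ≤ lam), (by omega : 1 ≤ r)]
    nlinarith
  refine Nat.lt_of_mul_lt_mul_right (a := lam - 1) ?_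
  calc lam ^ 2 * n * (lam - 1) = lam * (lam * (lam - 1) * n) := by ring
    _ = c * r * (lam * (r - 1)) := by rw [h]; ring
    _ < c * r * (2 * r * (lam - 1)) := Nat.mul_lt_mul_of_pos_left key (by positivity)
    _ = 2 * c * r ^ 2 * (lam - 1) := by ring

lemma sq_mul_succ_le_of_sq_mul_lt {d a b c n : ℕ} (hda : d ∣ a) (hdb : d ∣ b) (ha : 0 < a)
    (h : a ^ 2 * n < c * b ^ 2) :
    d ^ 2 * (n + 1) ≤ c * b ^ 2 := by
  obtain ⟨a', rfl⟩ := hda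
  obtain ⟨b', rfl⟩ := hdb
  have ha' : 1 ≤ a' ^ 2 := Nat.one_le_pow _ _ (Nat.pos_of_mul_pos_left ha)
  have hlt : a' ^ 2 * n < c * b' ^ 2 :=
    Nat.lt_of_mul_lt_mul_left (a := d ^ 2) (by linarith)
  calc d ^ 2 * (n + 1) ≤ d ^ 2 * (a' ^ 2 * n + 1) := by
        gcongr; exact Nat.le_mul_of_pos_left n ha'
    _ ≤ d ^ 2 * (c * b' ^ 2) := by gcongr; exact hlt
    _ = c * (d * b') ^ 2 := by ring

theorem stmt3_general (v k r lam y : ℕ)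
    (hr : 0 < r) (hlam : 2 ≤ lam) (hy : 2 ≤ y)
    (h1 : r * (k - 1) = lam * (v - 1))
    (h2 : (y - 1) * (r - 1) = (k - 1) * (lam - 1)) :
    (v : ℚ) ≤ 2 * ((y : ℚ) - 1) * (r : ℚ) ^ 2 / ((Nat.gcd r lam : ℚ)) ^ 2 := by
  have hlt : lam ^ 2 * (v - 1) < 2 * (y - 1) * r ^ 2 :=
    sq_mul_lt_of_mul_pred_mul_eq hlam hr (by omega) (mul_pred_mul_pred_eq h1 h2)
  have hle : Nat.gcd r lam ^ 2 * v ≤ 2 * (y - 1) * r ^ 2 :=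
    (Nat.mul_le_mul_left _ (by omega)).trans <|
      sq_mul_succ_le_of_sq_mul_lt (Nat.gcd_dvd_right r lam) (Nat.gcd_dvd_left r lam) (by omega) hlt
  have hg : (0 : ℚ) < (Nat.gcd r lam : ℚ) ^ 2 := by
    have := Nat.gcd_pos_of_pos_left lam hr
    positivity
  rw [le_div_iff₀ hg, ← Nat.cast_pred (by omega : 0 < y)]
  exact_mod_cast (by linarith [hle] : v * Nat.gcd r lam ^ 2 ≤ 2 * (y - 1) * r ^ 2)

/-- From r(k−1)=λ(v−1) and (y−1)(r−1)=(k−1)(λ−1) with y,λ ≥ 2 one gets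
v ≤ 2(y−1)·r²/gcd(r,λ)². -/
theorem stmt3 (v k r lam y : ℕ)
    (hv : 0 < v) (hk : 0 < k) (hr : 0 < r) (hlam : 2 ≤ lam) (hy : 2 ≤ y)
    (h1 : r * (k - 1) = lam * (v - 1))
    (h2 : (y - 1) * (r - 1) = (k - 1) * (lam - 1)) :
    (v : ℚ) ≤ 2 * ((y : ℚ) - 1) * (r : ℚ) ^ 2 / ((Nat.gcd r lam : ℚ)) ^ 2 :=
  stmt3_general v k r lam y hr hlam hy h1 h2
end

section
/- There are no positive integers (v,b,r,k,λ) with 2 < k < v−1, v = 15, satisfying simultaneously: 2 ≤ y ≤ 10, v < (k²−k)/(y−1), r(k−1) = λ(v−1), (y−1)(r−1) = (k−1)(λ−1), y | k, y | (r−λ), and b = vr/k an integer with r > k > λ > 1. -/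
/-!
Since `λ ≤ k - 1`, the relation `r (k - 1) = λ (v - 1)` forces `r ≤ v - 1 = 14`, so together with
`k < r` only finitely many pairs `(k, r)` remain, and each determines `λ`. None of them admits an
intersection number: for `r = 14` one has `λ = k - 1` and `13 (y - 1) = (k - 1) (k - 2)` with
`k ≤ 13`, which the prime `13` rules out; the remaining candidates `(k, r, λ)` are `(5, 7, 2)`,
`(8, 10, 5)` and `(8, 12, 6)`, where `(r - 1) ∤ (k - 1) (λ - 1)`.
-/

theorem replication_le_pred_of_lambda_lt {v r k lam : ℕ} (hk : 1 < k) (hlam : lam < k)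
    (hrep : r * (k - 1) = lam * (v - 1)) : r ≤ v - 1 := by
  have h : r * (k - 1) ≤ (v - 1) * (k - 1) :=
    calc r * (k - 1) = (v - 1) * lam := by rw [hrep, mul_comm]
      _ ≤ (v - 1) * (k - 1) := Nat.mul_le_mul_left _ (by omega)
  exact Nat.le_of_mul_le_mul_right h (by omega)

/-- There are no feasible quasi-symmetric design parameters with v = 15. -/
theorem stmt10 :
    ¬ ∃ b r k lam y : ℕ,
      2 < k ∧ k < 15 - 1 ∧ 2 ≤ y ∧ y ≤ 10 ∧
      (15 : ℚ) < ((k : ℚ) ^ 2 - k) / ((y : ℚ) - 1) ∧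
      r * (k - 1) = lam * (15 - 1) ∧
      (y - 1) * (r - 1) = (k - 1) * (lam - 1) ∧
      y ∣ k ∧ y ∣ (r - lam) ∧
      b * k = 15 * r ∧
      lam < k ∧ k < r ∧ 1 < lam := by
  rintro ⟨-, r, k, lam, y, hk, hkv, -, -, -, hrep, hint, -, -, -, hlam, hkr, hlam1⟩
  have hr : r ≤ 14 := replication_le_pred_of_lambda_lt (by omega) hlam hrep
  interval_cases k <;> interval_cases r <;> omega
end

section
/- Let n be an integer such that b = n(n−1)²(n−2)/(12(n+2)) is a positive integer with associated parameters v = n(n−1)/2, k = n+2, r = (n−1)(n−2)/6, λ = (n−1)/3 all positive integers. Then (n+2) divides 72, and the only solution with λ ≥ 2 is n = 10, giving (v,b,r,k,λ) = (45,45,12,12,3); but then b = v, so no non-symmetric design arises. -/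
/-- In the case l=2, u=4, y=3: if b = n(n−1)²(n−2)/(12(n+2)) is a positive
integer with v = n(n−1)/2, k = n+2, r = (n−1)(n−2)/6, λ = (n−1)/3 integers and
λ ≥ 2, then (n+2) ∣ 72, n = 10, (v,b,r,k,λ) = (45,45,12,12,3) and b = v. -/
theorem stmt16 (n : ℕ)
    (hpos : 0 < n * (n - 1) ^ 2 * (n - 2))
    (hb : 12 * (n + 2) ∣ n * (n - 1) ^ 2 * (n - 2))
    (hv : 2 ∣ n * (n - 1))
    (hr : 6 ∣ (n - 1) * (n - 2))
    (hlam : 3 ∣ (n - 1))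
    (hlam2 : 2 ≤ (n - 1) / 3) :
    (n + 2) ∣ 72 ∧ n = 10 ∧
      n * (n - 1) / 2 = 45 ∧
      n * (n - 1) ^ 2 * (n - 2) / (12 * (n + 2)) = 45 ∧
      (n - 1) * (n - 2) / 6 = 12 ∧ n + 2 = 12 ∧ (n - 1) / 3 = 3 ∧
      n * (n - 1) ^ 2 * (n - 2) / (12 * (n + 2)) = n * (n - 1) / 2 := by
  have h7 : 7 ≤ n := by omega
  obtain ⟨m, rfl⟩ : ∃ m, n = m + 7 := ⟨n - 7, by omega⟩
  have e1 : m + 7 - 1 = m + 6 := by omega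
  have e2 : m + 7 - 2 = m + 5 := by omega
  rw [e1, e2] at *
  have key : (m + 7) * (m + 6) ^ 2 * (m + 5)
      = (m + 9) * (m ^ 3 + 15 * m ^ 2 + 80 * m + 132) + 72 := by ring
  have h72 : (m + 9) ∣ 72 := by
    have hx : (m + 9) ∣ (m + 7) * (m + 6) ^ 2 * (m + 5) := by
      refine dvd_trans ?_ hb
      exact ⟨12, by ring⟩
    rw [key] at hx
    exact (Nat.dvd_add_right (Dvd.intro _ rfl)).mp hx
  have hle : m ≤ 63 := by
    have := Nat.le_of_dvd (by norm_num) h72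
    omega
  interval_cases m <;> revert hb hlam hlam2 <;> decide
end

section
/- The complete list of parameter tuples (y,v,b,r,k,λ) with λ ≥ 2, r > k > λ > 1, gcd considerations aside, satisfying 2 ≤ y ≤ 10, v < (k²−k)/(y−1), r(k−1)=λ(v−1), (y−1)(r−1)=(k−1)(λ−1), y|k, y|(r−λ), b=vr/k integral, for v = 12 with r/gcd(r,λ) dividing 11, is exactly {(3,12,22,11,6,5)}; and for v = 22 with r/gcd(r,λ) dividing 21, is exactly {(2,22,77,21,6,5)}. -/
/-!
Since `λ < k`, the design relation `r (k - 1) = λ (v - 1)` forces `r ≤ v - 1`, and `k < r`.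
For fixed `v` this leaves finitely many triples `(r, k, y)`, and `λ` and `b` are determined
by them; checking these cases leaves exactly one tuple for `v = 12` and one for `v = 22`.
-/

theorem le_pred_of_mul_pred_eq {v r k lam : ℕ} (hlam : 0 < lam) (hlk : lam < k)
    (h : r * (k - 1) = lam * (v - 1)) : r ≤ v - 1 := by
  refine Nat.le_of_mul_le_mul_right ?_ (by omega : 0 < k - 1)
  rw [h, mul_comm (v - 1)]
  exact Nat.mul_le_mul_right _ (by omega)

section

variable {y r k lam : ℕ}

theorem params_eq_of_v_eq_twelve (hy2 : 2 ≤ y) (hy10 : y ≤ 10) (hlam : 1 < lam)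
    (hlk : lam < k) (hkr : k < r) (hfisher : r * (k - 1) = lam * 11)
    (hqs : (y - 1) * (r - 1) = (k - 1) * (lam - 1)) (hyk : y ∣ k) (hyr : y ∣ r - lam) :
    y = 3 ∧ r = 11 ∧ k = 6 ∧ lam = 5 := by
  have hr : r ≤ 11 := le_pred_of_mul_pred_eq (v := 12) (by omega) hlk hfisher
  have hk : 3 ≤ k := by omega
  interval_cases r <;> interval_cases k <;> interval_cases y <;> omega

theorem params_eq_of_v_eq_twentytwo (hy2 : 2 ≤ y) (hy10 : y ≤ 10) (hlam : 1 < lam)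
    (hlk : lam < k) (hkr : k < r) (hfisher : r * (k - 1) = lam * 21)
    (hqs : (y - 1) * (r - 1) = (k - 1) * (lam - 1)) (hyk : y ∣ k) (hyr : y ∣ r - lam) :
    y = 2 ∧ r = 21 ∧ k = 6 ∧ lam = 5 := by
  have hr : r ≤ 21 := le_pred_of_mul_pred_eq (v := 22) (by omega) hlk hfisher
  have hk : 3 ≤ k := by omega
  interval_cases r <;> interval_cases k <;> interval_cases y <;> omega

end

/-- Feasible quasi-symmetric parameter tuples (y,v,b,r,k,λ): for v = 12 with
r/gcd(r,λ) ∣ 11 the unique solution is (3,12,22,11,6,5); for v = 22 with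
r/gcd(r,λ) ∣ 21 the unique solution is (2,22,77,21,6,5). -/
theorem stmt19 :
    (∀ y b r k lam : ℕ,
      (2 ≤ y ∧ y ≤ 10 ∧ 1 < lam ∧ lam < k ∧ k < r ∧
        (12 : ℚ) < ((k : ℚ) ^ 2 - k) / ((y : ℚ) - 1) ∧
        r * (k - 1) = lam * (12 - 1) ∧
        (y - 1) * (r - 1) = (k - 1) * (lam - 1) ∧
        y ∣ k ∧ y ∣ (r - lam) ∧
        b * k = 12 * r ∧
        (r / Nat.gcd r lam) ∣ 11) ↔
      (y = 3 ∧ b = 22 ∧ r = 11 ∧ k = 6 ∧ lam = 5)) ∧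
    (∀ y b r k lam : ℕ,
      (2 ≤ y ∧ y ≤ 10 ∧ 1 < lam ∧ lam < k ∧ k < r ∧
        (22 : ℚ) < ((k : ℚ) ^ 2 - k) / ((y : ℚ) - 1) ∧
        r * (k - 1) = lam * (22 - 1) ∧
        (y - 1) * (r - 1) = (k - 1) * (lam - 1) ∧
        y ∣ k ∧ y ∣ (r - lam) ∧
        b * k = 22 * r ∧
        (r / Nat.gcd r lam) ∣ 21) ↔
      (y = 2 ∧ b = 77 ∧ r = 21 ∧ k = 6 ∧ lam = 5)) := by
  refine ⟨fun y b r k lam => ⟨?_, ?_⟩, fun y b r k lam => ⟨?_, ?_⟩⟩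
  · rintro ⟨hy2, hy10, hlam, hlk, hkr, -, hfisher, hqs, hyk, hyr, hb, -⟩
    obtain ⟨rfl, rfl, rfl, rfl⟩ :=
      params_eq_of_v_eq_twelve hy2 hy10 hlam hlk hkr hfisher hqs hyk hyr
    exact ⟨rfl, by omega, rfl, rfl, rfl⟩
  · rintro ⟨rfl, rfl, rfl, rfl, rfl⟩
    norm_num
  · rintro ⟨hy2, hy10, hlam, hlk, hkr, -, hfisher, hqs, hyk, hyr, hb, -⟩
    obtain ⟨rfl, rfl, rfl, rfl⟩ :=
      params_eq_of_v_eq_twentytwo hy2 hy10 hlam hlk hkr hfisher hqs hyk hyr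
    exact ⟨rfl, by omega, rfl, rfl, rfl⟩
  · rintro ⟨rfl, rfl, rfl, rfl, rfl⟩
    norm_num
end
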